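/- arXiv:2201.07993 — 9 statements merged into one kernel-verified Lean document; each statement's English description precedes it below -/
import Mathlib

section
/- Let d be a direct dependency relation on a type T of transactions and let P ⊆ T be a read safe snapshot (RSS) for d. Let r ∈ T with r ∉ P be such that every direct dependency into r originates in P (for all x, d x r implies x ∈ P) — as holds for any protected read-only transaction regarding P, whose only incoming conflicts are write-read conflicts from transactions in P. Then r is unreachable from every transaction outside P: for every q ∉ P, ¬ Relation.TransGen d q r. -/
/-- A set `P` of transactions is a read safe snapshot (RSS) for the direct
dependency relation `d` if no transaction inside `P` is reachable (by a
nonempty dependency path) from a transaction outside `P`. -/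
def IsRSS {T : Type*} (d : T → T → Prop) (P : Set T) : Prop :=
  ∀ q ∉ P, ∀ p ∈ P, ¬ Relation.TransGen d q p

/-- Paper's Lemma 1: a protected read-only transaction `r` regarding an RSS `P`
(all of whose incoming direct dependencies originate in `P`) is unreachable
from every transaction outside `P`. -/
theorem rss_protected_readonly_unreachable {T : Type*} (d : T → T → Prop) (P : Set T)
    (hRSS : IsRSS d P) (r : T) (hr : r ∉ P) (hin : ∀ x, d x r → x ∈ P) :
    ∀ q ∉ P, ¬ Relation.TransGen d q r := by
  intro q hq h
  obtain ⟨x, hx, hxr⟩ := Relation.TransGen.tail'_iff.mp h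
  rcases Relation.reflTransGen_iff_eq_or_transGen.mp hx with rfl | hx'
  · exact hq (hin x hxr)
  · exact hRSS q hq x (hin x hxr) hx'
end

section
/- Let d be a direct dependency relation on T, let P ⊆ T be a read safe snapshot (RSS) for d, and let R ⊆ T be a set of transactions with R ∩ P = ∅ such that every r ∈ R has all of its incoming d-edges originating in P (for all r ∈ R and all x, d x r → x ∈ P). If the restriction of d to T \ R (the relation d'' with d'' x y ↔ d x y ∧ x ∉ R ∧ y ∉ R) is acyclic, then d itself is acyclic. -/
/-- Removing a set `R` of protected read-only transactions regarding an RSS `P`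
is recursively applicable: if the dependency relation restricted to the
complement of `R` is acyclic, the whole dependency relation is acyclic. -/
theorem rss_remove_readonly_set_acyclic {T : Type*} (d : T → T → Prop) (P R : Set T)
    (hRSS : IsRSS d P)
    (hdisj : R ∩ P = ∅)
    (hin : ∀ r ∈ R, ∀ x, d x r → x ∈ P)
    (hacyc : ∀ x, ¬ Relation.TransGen (fun x y => d x y ∧ x ∉ R ∧ y ∉ R) x x) :
    ∀ x, ¬ Relation.TransGen d x x := by
  have hRP : ∀ r ∈ R, r ∉ P := by
    intro r hr hrP
    have : r ∈ R ∩ P := ⟨hr, hrP⟩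
    rw [hdisj] at this; exact this
  intro x hx
  -- x itself is not in R
  have hxR : x ∉ R := by
    intro hxRmem
    obtain ⟨y, hxy, hyx⟩ := Relation.TransGen.tail'_iff.mp hx
    have hyP : y ∈ P := hin x hxRmem y hyx
    have hxP : x ∉ P := hRP x hxRmem
    rcases hxy.cases_head with h | ⟨c, hxc, hcy⟩
    · exact hxP (h ▸ hyP)
    · exact hRSS x hxP y hyP (Relation.TransGen.head' hxc hcy)
  -- lift the cycle to the restricted relation
  have key : ∀ b, Relation.TransGen d x b → Relation.ReflTransGen d b x →
      Relation.TransGen (fun x y => d x y ∧ x ∉ R ∧ y ∉ R) x b := by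
    intro b hb
    induction hb with
    | single h =>
      intro hbx
      have hbR : ‹T› ∉ R := by
        intro hbRmem
        have hxP : x ∈ P := hin _ hbRmem x h
        have hbP : _ ∉ P := hRP _ hbRmem
        rcases hbx.cases_head with heq | ⟨c, hbc, hcx⟩
        · exact hxR (heq ▸ hbRmem)
        · exact hRSS _ hbP x hxP (Relation.TransGen.head' hbc hcx)
      exact Relation.TransGen.single ⟨h, hxR, hbR⟩
    | tail hxc hcb ih =>
      intro hbx
      rename_i c b
      have hcx : Relation.ReflTransGen d c x := Relation.ReflTransGen.head hcb hbx
      have hxc' := ih hcx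
      have hcR : c ∉ R := by
        obtain ⟨y, _, hy⟩ := Relation.TransGen.tail'_iff.mp hxc'
        exact hy.2.2
      have hbR : b ∉ R := by
        intro hbRmem
        have hcP : c ∈ P := hin b hbRmem c hcb
        have hbP : b ∉ P := hRP b hbRmem
        exact hRSS b hbP c hcP (Relation.TransGen.trans_right hbx hxc)
      exact hxc'.tail ⟨hcb, hcR, hbR⟩
  exact hacyc x (key x hx Relation.ReflTransGen.refl)
end

section
/- In the SI model, for transactions a and b with E a < B b, there is no direct conflict from b to a: there is no write-read conflict b → a, no write-write conflict b → a, and no read-write conflict b → a. -/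
/-- Write-read conflict `b → a` in the SI model: `a` reads an item `x` written
by `b`, and `b`'s version is the SI-V version for `a` (the most recent version
committed before `a` began). -/
def WRConflict {T X : Type*} (B E : T → ℕ) (writes reads : T → Set X) (b a : T) : Prop :=
  ∃ x, x ∈ reads a ∧ x ∈ writes b ∧ E b < B a ∧
    ∀ u, x ∈ writes u → E u < B a → E u ≤ E b

/-- Write-write conflict `b → a` in the SI model: some item `x` is written by
both `b` and `a`, and `a` writes the immediate successor version of `b`'s
version in the SI version order (end timestamps of the writers). -/
def WWConflict {T X : Type*} (B E : T → ℕ) (writes : T → Set X) (b a : T) : Prop :=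
  ∃ x, x ∈ writes b ∧ x ∈ writes a ∧ E b < E a ∧
    ∀ u, x ∈ writes u → ¬ (E b < E u ∧ E u < E a)

/-- Read-write conflict `b → a` in the SI model: `b` reads some item `x` whose
SI-V version for `b` is written by `w`, and `a` writes the immediate successor
version of `w`'s version. -/
def RWConflict {T X : Type*} (B E : T → ℕ) (writes reads : T → Set X) (b a : T) : Prop :=
  ∃ x w, x ∈ reads b ∧ x ∈ writes w ∧ E w < B b ∧
    (∀ u, x ∈ writes u → E u < B b → E u ≤ E w) ∧
    x ∈ writes a ∧ E w < E a ∧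
    ∀ u, x ∈ writes u → ¬ (E w < E u ∧ E u < E a)

/-- Paper's Lemma 2 (SSI-1): if `E a < B b` then there is no direct conflict
(write-read, write-write, or read-write) from `b` to `a`. -/
theorem ssi1_no_conflict_against_commit_order {T X : Type*}
    (B E : T → ℕ) (writes reads : T → Set X)
    (hBE : ∀ t, B t < E t)
    (hdistB : ∀ s t, B s = B t → s = t)
    (hdistE : ∀ s t, E s = E t → s = t)
    (hdistBE : ∀ s t, B s ≠ E t)
    (a b : T) (hab : E a < B b) :
    ¬ WRConflict B E writes reads b a ∧
    ¬ WWConflict B E writes b a ∧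
    ¬ RWConflict B E writes reads b a := by
  refine ⟨?_, ?_, ?_⟩
  · rintro ⟨x, -, -, hba, -⟩
    have := hBE a; have := hBE b; omega
  · rintro ⟨x, -, -, hlt, -⟩
    have := hBE b; omega
  · rintro ⟨x, w, -, -, -, hmax, hax, hwa, -⟩
    have := hmax a hax hab; omega
end

section
/- In the SI model, assume additionally SI-W: the writesets of any two concurrent transactions are disjoint. If a and b are concurrent (B a < E b and B b < E a) and there is a direct conflict from b to a, then that conflict must be a read-write conflict; that is, under concurrency of a and b there is no write-read conflict b → a and no write-write conflict b → a. -/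
/-- Under SI-W (disjoint writesets of concurrent transactions), a direct
conflict from `b` to `a` between concurrent transactions can only be a
read-write conflict: no write-read and no write-write conflict `b → a`. -/
theorem concurrent_conflict_is_rw {T X : Type*}
    (B E : T → ℕ) (writes reads : T → Set X)
    (hBE : ∀ t, B t < E t)
    (hdistB : ∀ s t, B s = B t → s = t)
    (hdistE : ∀ s t, E s = E t → s = t)
    (hdistBE : ∀ s t, B s ≠ E t)
    (hSIW : ∀ s t, s ≠ t → B s < E t → B t < E s → writes s ∩ writes t = ∅)
    (a b : T) (hconc : B a < E b ∧ B b < E a) :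
    ¬ WRConflict B E writes reads b a ∧ ¬ WWConflict B E writes b a := by
  obtain ⟨h1, h2⟩ := hconc
  constructor
  · rintro ⟨x, -, -, hlt, -⟩
    exact absurd h1 (not_lt.2 hlt.le)
  · rintro ⟨x, hxb, hxa, hlt, -⟩
    have hne : b ≠ a := fun h => lt_irrefl _ (h ▸ hlt)
    have := hSIW b a hne h2 h1
    exact absurd (Set.mem_inter hxb hxa) (this ▸ Set.notMem_empty x)
end

section
/- Assume the SI ordering law: for all transactions x and y, E x ≤ B y implies ¬ d y x. Then for all transactions a and b with B a < E b, if d b a holds, then a and b are concurrent (B a < E b and B b < E a), i.e., the dependency d b a is a vulnerable dependency. -/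
/-- Paper's Lemma 3 (SSI-2): under the SI ordering law, a dependency `d b a`
with `B a < E b` must be a vulnerable dependency, i.e. `a` and `b` are
concurrent. -/
theorem ssi2_vulnerable {T α : Type*} [LinearOrder α]
    (B E : T → α) (d : T → T → Prop)
    (hBE : ∀ t, B t < E t)
    (hSI : ∀ x y, E x ≤ B y → ¬ d y x) :
    ∀ a b, B a < E b → d b a → B a < E b ∧ B b < E a := by
  intro a b h hd
  refine ⟨h, ?_⟩
  by_contra hle
  exact hSI a b (le_of_not_gt hle) hd
end

section
/- Assume B t < E t for all transactions t and the SI ordering law: for all x and y, E x ≤ B y implies ¬ d y x. Then for any prefix cutoff t₀, if c ∈ Clear, u ∉ Clear, and d u c holds, then u and c are concurrent (B u < E c and B c < E u), i.e., the dependency d u c is a vulnerable dependency. -/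
/-- Paper's Lemma 4 (SSI-3): under the SI ordering law, for any prefix cutoff
`t₀`, a dependency `d u c` from `u ∉ Clear` into `c ∈ Clear` is a vulnerable
dependency (`u` and `c` are concurrent). -/
theorem ssi3_clear_incoming_vulnerable {T α : Type*} [LinearOrder α]
    (B E : T → α) (d : T → T → Prop)
    (hBE : ∀ t, B t < E t)
    (hSI : ∀ x y, E x ≤ B y → ¬ d y x)
    (t₀ : α) (c u : T)
    (hc : ∀ b, ¬ (E b ≤ t₀) → E c < B b)
    (hu : ¬ ∀ b, ¬ (E b ≤ t₀) → E u < B b)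
    (huc : d u c) :
    B u < E c ∧ B c < E u := by
  push_neg at hu
  obtain ⟨b, hb, hbu⟩ := hu
  constructor
  · by_contra h
    exact hSI c u (le_of_not_gt h) huc
  · exact lt_of_lt_of_le (lt_trans (hBE c) (hc b (not_le.mpr hb))) hbu
end

section
/- Assume the SI ordering law (for all x and y, E x ≤ B y implies ¬ d y x) and that the history has no dangerous structure. If d u c holds with u and c concurrent, and d v u holds, then E v ≤ B u; that is, v finished before u began. -/
/-- Key step of the paper's Theorem 2 (SSI-4): under the SI ordering law and
absence of dangerous structures, a dependency `d v u` preceding a vulnerable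
dependency `d u c` cannot itself be vulnerable, so `v` finished before `u`
began. -/
theorem no_dangerous_predecessor_finished {T α : Type*} [LinearOrder α]
    (B E : T → α) (d : T → T → Prop)
    (hBE : ∀ t, B t < E t)
    (hSI : ∀ x y, E x ≤ B y → ¬ d y x)
    (hND : ¬ ∃ a b c, d a b ∧ d b c ∧
      (B a < E b ∧ B b < E a) ∧ (B b < E c ∧ B c < E b))
    (u c v : T)
    (huc : d u c) (hconc : B u < E c ∧ B c < E u)
    (hvu : d v u) :
    E v ≤ B u := by
  by_contra h
  push_neg at h
  have hvEu : B v < E u := by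
    by_contra h2
    push_neg at h2
    exact hSI u v h2 hvu
  exact hND ⟨v, u, c, hvu, huc, ⟨hvEu, h⟩, hconc⟩
end

section
/- Assume B t < E t for all transactions t, the SI ordering law (for all x and y, E x ≤ B y implies ¬ d y x), and that the history has no dangerous structure. Then for any prefix cutoff t₀, if c ∈ Clear, u ∉ Clear, d u c, and d v u, then v ∈ Clear. -/
/-- Paper's Theorem 2 (SSI-4): under the SI ordering law and absence of
dangerous structures, if `c ∈ Clear`, `u ∉ Clear`, `d u c` and `d v u`, then
`v ∈ Clear`. -/
theorem ssi4_predecessor_in_clear {T α : Type*} [LinearOrder α]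
    (B E : T → α) (d : T → T → Prop)
    (hBE : ∀ t, B t < E t)
    (hSI : ∀ x y, E x ≤ B y → ¬ d y x)
    (hND : ¬ ∃ a b c, d a b ∧ d b c ∧
      (B a < E b ∧ B b < E a) ∧ (B b < E c ∧ B c < E b))
    (t₀ : α) (c u v : T)
    (hc : ∀ b, ¬ (E b ≤ t₀) → E c < B b)
    (hu : ¬ ∀ b, ¬ (E b ≤ t₀) → E u < B b)
    (huc : d u c) (hvu : d v u) :
    ∀ b, ¬ (E b ≤ t₀) → E v < B b := by
  push_neg at hu
  obtain ⟨b₀, hb₀, hBb₀⟩ := hu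
  -- B u < E c from SI
  have hBuEc : B u < E c := lt_of_not_ge fun h => hSI c u h huc
  have hEcBb₀ : E c < B b₀ := hc b₀ (not_le.mpr hb₀)
  have hEcEu : E c < E u := lt_of_lt_of_le hEcBb₀ hBb₀
  -- B v < E u from SI
  have hBvEu : B v < E u := lt_of_not_ge fun h => hSI u v h hvu
  -- v, u not concurrent
  have hEvBu : E v ≤ B u := by
    by_contra h
    push_neg at h
    exact hND ⟨v, u, c, hvu, huc, ⟨hBvEu, h⟩, ⟨hBuEc, (hBE c).trans_le hEcEu.le⟩⟩
  intro b hb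
  exact lt_of_le_of_lt hEvBu (hBuEc.trans (hc b hb))
end

section
/- Assume B t < E t for all transactions t, the SI ordering law (for all x and y, E x ≤ B y implies ¬ d y x), and that the history has no dangerous structure. For a prefix cutoff t₀, define P := Clear ∪ {u | ∃ c ∈ Clear, d u c}. Then P is a read safe snapshot (RSS) for d: for every q ∉ P and every p ∈ P, there is no nonempty dependency path from q to p (¬ Relation.TransGen d q p). -/
/-- The Clear transactions for a prefix cutoff `t₀`. -/
def ClearSet {T α : Type*} [LinearOrder α] (B E : T → α) (t₀ : α) : Set T :=
  {a | ∀ b, ¬ (E b ≤ t₀) → E a < B b}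

/-- Correctness of the RSS construction algorithm (Algorithm 1): under the SI
ordering law and absence of dangerous structures, the set
`P = Clear ∪ {u | ∃ c ∈ Clear, d u c}` is a read safe snapshot for `d`:
no transaction in `P` is reachable by a nonempty dependency path from a
transaction outside `P`. -/
theorem rss_construction_correct {T α : Type*} [LinearOrder α]
    (B E : T → α) (d : T → T → Prop)
    (hBE : ∀ t, B t < E t)
    (hSI : ∀ x y, E x ≤ B y → ¬ d y x)
    (hND : ¬ ∃ a b c, d a b ∧ d b c ∧
      (B a < E b ∧ B b < E a) ∧ (B b < E c ∧ B c < E b))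
    (t₀ : α) :
    ∀ q ∉ (ClearSet B E t₀ ∪ {u | ∃ c ∈ ClearSet B E t₀, d u c}),
      ∀ p ∈ (ClearSet B E t₀ ∪ {u | ∃ c ∈ ClearSet B E t₀, d u c}),
        ¬ Relation.TransGen d q p := by
  set P : Set T := ClearSet B E t₀ ∪ {u | ∃ c ∈ ClearSet B E t₀, d u c} with hP
  -- Key claim: no direct dependency from outside P into P.
  have key : ∀ x y, x ∉ P → y ∈ P → ¬ d x y := by
    intro x y hx hy hxy
    rcases hy with hyC | ⟨c, hcC, hyc⟩
    · exact hx (Or.inr ⟨y, hyC, hxy⟩)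
    · -- y ∈ P \ Clear (if y ∈ Clear, x ∈ P)
      by_cases hyClear : y ∈ ClearSet B E t₀
      · exact hx (Or.inr ⟨y, hyClear, hxy⟩)
      · -- x ∉ Clear: witness b₂ not done with B b₂ ≤ E x
        have hxClear : x ∉ ClearSet B E t₀ := fun h => hx (Or.inl h)
        simp only [ClearSet, Set.mem_setOf_eq, not_forall] at hyClear hxClear
        obtain ⟨b₁, hb₁, hb₁y⟩ := hyClear
        obtain ⟨b₂, hb₂, hb₂x⟩ := hxClear
        push_neg at hb₁y hb₂x
        -- edges give B _ < E _ in one direction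
        have hBxEy : B x < E y := by
          by_contra h
          exact hSI y x (not_lt.mp h) hxy
        have hByEc : B y < E c := by
          by_contra h
          exact hSI c y (not_lt.mp h) hyc
        -- c ∈ Clear: E c < B b for any not-done b
        have hc₁ : E c < B b₁ := hcC b₁ hb₁
        have hc₂ : E c < B b₂ := hcC b₂ hb₂
        -- B c < E y
        have hBcEy : B c < E y := lt_of_lt_of_le (lt_trans (hBE c) hc₁) hb₁y
        -- B y < E x : otherwise E x ≤ B y < E c, so B b₂ ≤ E x < E c < B b₂
        have hByEx : B y < E x := by
          by_contra h
          have hEx : E x ≤ B y := not_lt.mp h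
          exact absurd (lt_of_le_of_lt (le_trans hb₂x (le_trans hEx hByEc.le)) hc₂)
            (lt_irrefl _)
        exact hND ⟨x, y, c, hxy, hyc, ⟨hBxEy, hByEx⟩, ⟨hByEc, hBcEy⟩⟩
  intro q hq p hp hpath
  -- Show by induction: TransGen d q p → p ∈ P → q ∈ P
  have : ∀ {a b : T}, Relation.TransGen d a b → b ∈ P → a ∈ P := by
    intro a b hab
    induction hab with
    | single h => intro hb; by_contra ha; exact key _ _ ha hb h
    | tail _ h ih =>
        intro hc
        apply ih
        by_contra hb
        exact key _ _ hb hc h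
  exact hq (this hpath hp)
end
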